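/- Let f(z) = z + β + ∫_ℝ (1+tz)/(t−z) dμ(t) on the upper half-plane H, where μ is a symmetric finite positive Borel measure with ∫_ℝ |t| dμ(t) = ∞ and β ≠ 0. Then for every z₀ ∈ H and every n ≥ 1, writing C = |β| + μ({0})/y₀, one has |x_n| ≤ C·(1 + y_n·Σ_{j=1}^{n−1} 1/y_j) + (y_n/y₀)·|x₀|, where z_k = f^k(z₀), x_k = Re z_k, y_k = Im z_k. -/

import Mathlib

open MeasureTheory Filter Complex Topology

/-!
Write `k_z(t) = (1 + t z)/(t - z)`, so that `f(z) = z + β + ∫ k_z dμ` and `Im f(z) ≥ Im z`.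
For `z = x + iy`, pairing `t` with `-t` gives the pointwise bound
`|Re k_z(t) + Re k_z(-t)| ≤ (|x|/y) (Im k_z(t) + Im k_z(-t))`, and since `μ` is symmetric
this integrates to `|Re f(z)| ≤ |β| + (|x|/y) Im f(z)`. Dividing by `Im f(z)` shows that
`|x_k|/y_k` grows by at most `|β|/y_{k+1}` per step; summing these increments and applying the
one-step bound once more at the last step gives the estimate.
-/

/-- The parabolic self-map of the upper half-plane associated to `β` and `μ`:
`f(z) = z + β + ∫ (1+tz)/(t−z) dμ(t)`. -/
noncomputable def fmap (β : ℝ) (μ : Measure ℝ) (z : ℂ) : ℂ :=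
  z + (β : ℂ) + ∫ t : ℝ, (1 + (t : ℂ) * z) / ((t : ℂ) - z) ∂μ

/-- The pseudo-hyperbolic distance on the upper half-plane:
`ρ(z,w) = |z−w|/|z−conj w|`. -/
noncomputable def pseudoHyp (z w : ℂ) : ℝ :=
  ‖z - w‖ / ‖z - (starRingEnd ℂ) w‖

/-- `f` is of zero hyperbolic step: there exists `z` in the upper half-plane with
`ρ(f^[n+1] z, f^[n] z) → 0`. -/
def ZeroHS (f : ℂ → ℂ) : Prop :=
  ∃ z : ℂ, 0 < z.im ∧
    Tendsto (fun n : ℕ => pseudoHyp (f^[n + 1] z) (f^[n] z)) atTop (𝓝 0)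

noncomputable def nevanlinnaKernel (z : ℂ) (t : ℝ) : ℂ :=
  (1 + t * z) / (t - z)

section Kernel

variable {z : ℂ}

lemma ofReal_sub_ne_zero_of_im_pos (hz : 0 < z.im) (t : ℝ) : (t : ℂ) - z ≠ 0 :=
  fun h => hz.ne' (by simpa using congrArg im h)

lemma im_le_norm_ofReal_sub (z : ℂ) (t : ℝ) : z.im ≤ ‖(t : ℂ) - z‖ :=
  calc z.im ≤ |((t : ℂ) - z).im| := by simp [le_abs_self]
    _ ≤ ‖(t : ℂ) - z‖ := abs_im_le_norm _

lemma continuous_nevanlinnaKernel (hz : 0 < z.im) : Continuous (nevanlinnaKernel z) :=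
  Continuous.div (by fun_prop) (by fun_prop) (ofReal_sub_ne_zero_of_im_pos hz)

lemma norm_nevanlinnaKernel_le (hz : 0 < z.im) (t : ℝ) :
    ‖nevanlinnaKernel z t‖ ≤ ‖z‖ + ‖1 + z ^ 2‖ / z.im := by
  have hne := ofReal_sub_ne_zero_of_im_pos hz t
  have hsplit : nevanlinnaKernel z t = z + (1 + z ^ 2) / ((t : ℂ) - z) := by
    rw [nevanlinnaKernel]
    field_simp
    ring
  rw [hsplit]
  refine (norm_add_le _ _).trans (add_le_add_right ?_ _)
  rw [norm_div]
  exact div_le_div_of_nonneg_left (norm_nonneg _) hz (im_le_norm_ofReal_sub z t)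

lemma integrable_nevanlinnaKernel (hz : 0 < z.im) (μ : Measure ℝ) [IsFiniteMeasure μ] :
    Integrable (nevanlinnaKernel z) μ :=
  Integrable.mono' (integrable_const _) (continuous_nevanlinnaKernel hz).aestronglyMeasurable
    (ae_of_all _ (norm_nevanlinnaKernel_le hz))

lemma nevanlinnaKernel_re (z : ℂ) (t : ℝ) :
    (nevanlinnaKernel z t).re
      = ((1 + t * z.re) * (t - z.re) - t * z.im ^ 2) / ((t - z.re) ^ 2 + z.im ^ 2) := by
  rw [nevanlinnaKernel, div_re]
  simp [normSq_apply]
  ring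

lemma nevanlinnaKernel_im (z : ℂ) (t : ℝ) :
    (nevanlinnaKernel z t).im = z.im * (1 + t ^ 2) / ((t - z.re) ^ 2 + z.im ^ 2) := by
  rw [nevanlinnaKernel, div_im]
  simp [normSq_apply]
  ring

lemma nevanlinnaKernel_im_nonneg (hz : 0 ≤ z.im) (t : ℝ) : 0 ≤ (nevanlinnaKernel z t).im := by
  rw [nevanlinnaKernel_im]
  positivity

lemma abs_nevanlinnaKernel_re_add_re_neg_le (hz : 0 < z.im) (t : ℝ) :
    |(nevanlinnaKernel z t).re + (nevanlinnaKernel z (-t)).re|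
      ≤ |z.re| / z.im * ((nevanlinnaKernel z t).im + (nevanlinnaKernel z (-t)).im) := by
  rw [nevanlinnaKernel_re, nevanlinnaKernel_re, nevanlinnaKernel_im, nevanlinnaKernel_im]
  generalize z.re = x
  generalize z.im = y at hz ⊢
  have hDp : 0 < (t - x) ^ 2 + y ^ 2 := by positivity
  have hDm : 0 < (-t - x) ^ 2 + y ^ 2 := by positivity
  have hD := mul_pos hDp hDm
  -- over the common denominator both sides carry the factor `1 + t²`, and the claim reduces
  -- to `|t² - x² - y²| ≤ t² + x² + y²`
  have hre : ((1 + t * x) * (t - x) - t * y ^ 2) / ((t - x) ^ 2 + y ^ 2)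
        + ((1 + -t * x) * (-t - x) - -t * y ^ 2) / ((-t - x) ^ 2 + y ^ 2)
      = 2 * x * (1 + t ^ 2) * (t ^ 2 - x ^ 2 - y ^ 2)
        / (((t - x) ^ 2 + y ^ 2) * ((-t - x) ^ 2 + y ^ 2)) := by
    field_simp
    ring
  have him : |x| / y * (y * (1 + t ^ 2) / ((t - x) ^ 2 + y ^ 2)
        + y * (1 + (-t) ^ 2) / ((-t - x) ^ 2 + y ^ 2))
      = 2 * |x| * (1 + t ^ 2) * (t ^ 2 + x ^ 2 + y ^ 2)
        / (((t - x) ^ 2 + y ^ 2) * ((-t - x) ^ 2 + y ^ 2)) := by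
    field_simp
    ring
  have hcore : |t ^ 2 - x ^ 2 - y ^ 2| ≤ t ^ 2 + x ^ 2 + y ^ 2 := by
    rw [abs_le]
    constructor <;> nlinarith [sq_nonneg t, sq_nonneg x, sq_nonneg y]
  rw [hre, him, abs_div, abs_of_pos hD, div_le_div_iff_of_pos_right hD, abs_mul,
    abs_mul, abs_mul, abs_two, abs_of_pos (by positivity : (0 : ℝ) < 1 + t ^ 2)]
  gcongr

end Kernel

lemma abs_integral_le_of_abs_add_comp_neg_le {G : Type*} [MeasurableSpace G] [AddGroup G]
    [MeasurableNeg G] {μ : Measure G} [μ.IsNegInvariant] {u v : G → ℝ}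
    (hu : Integrable u μ) (hv : Integrable v μ) (h : ∀ t, |u t + u (-t)| ≤ v t + v (-t)) :
    |∫ t, u t ∂μ| ≤ ∫ t, v t ∂μ := by
  have hu' : Integrable (fun t => u t + u (-t)) μ := hu.add hu.comp_neg
  have hv' : Integrable (fun t => v t + v (-t)) μ := hv.add hv.comp_neg
  have key : |∫ t, u t + u (-t) ∂μ| ≤ ∫ t, v t + v (-t) ∂μ :=
    (abs_integral_le_integral_abs).trans (integral_mono hu'.abs hv' h)
  rw [integral_add hu hu.comp_neg, integral_add hv hv.comp_neg, integral_neg_eq_self,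
    integral_neg_eq_self, ← two_mul, ← two_mul, abs_mul, abs_two] at key
  linarith

lemma isNegInvariant_of_forall_measurableSet {μ : Measure ℝ}
    (hsym : ∀ A : Set ℝ, MeasurableSet A → μ A = μ ((fun t : ℝ => -t) ⁻¹' A)) :
    μ.IsNegInvariant :=
  ⟨Measure.ext fun A hA => by
    rw [Measure.neg_def, Measure.map_apply measurable_neg hA]
    exact (hsym A hA).symm⟩

section Fmap

variable {β : ℝ} {μ : Measure ℝ} [IsFiniteMeasure μ] {z : ℂ}

lemma fmap_re (hz : 0 < z.im) :
    (fmap β μ z).re = z.re + β + ∫ t, (nevanlinnaKernel z t).re ∂μ := by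
  rw [fmap, add_re, add_re, ofReal_re]
  exact congrArg _ (integral_re (integrable_nevanlinnaKernel hz μ)).symm

lemma fmap_im (hz : 0 < z.im) :
    (fmap β μ z).im = z.im + ∫ t, (nevanlinnaKernel z t).im ∂μ := by
  rw [fmap, add_im, add_im, ofReal_im, add_zero]
  exact congrArg _ (integral_im (integrable_nevanlinnaKernel hz μ)).symm

lemma im_le_fmap_im (hz : 0 < z.im) : z.im ≤ (fmap β μ z).im := by
  rw [fmap_im hz]
  exact le_add_of_nonneg_right (integral_nonneg (nevanlinnaKernel_im_nonneg hz.le))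

lemma abs_fmap_re_le [μ.IsNegInvariant] (hz : 0 < z.im) :
    |(fmap β μ z).re| ≤ |β| + |z.re| / z.im * (fmap β μ z).im := by
  have hk := integrable_nevanlinnaKernel hz μ
  have hint : |∫ t, (nevanlinnaKernel z t).re ∂μ|
      ≤ ∫ t, |z.re| / z.im * (nevanlinnaKernel z t).im ∂μ :=
    abs_integral_le_of_abs_add_comp_neg_le hk.re (hk.im.const_mul _) fun t => by
      rw [← mul_add]
      exact abs_nevanlinnaKernel_re_add_re_neg_le hz t
  rw [integral_const_mul] at hint
  have hx : |z.re| / z.im * z.im = |z.re| := div_mul_cancel₀ _ hz.ne'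
  calc |(fmap β μ z).re|
      ≤ |z.re| + |β| + |∫ t, (nevanlinnaKernel z t).re ∂μ| := by
        rw [fmap_re hz]
        exact (abs_add_le _ _).trans (add_le_add_left (abs_add_le _ _) _)
    _ ≤ |β| + |z.re| / z.im * (fmap β μ z).im := by
        rw [fmap_im hz, mul_add, hx]
        linarith

end Fmap

section Recursion

variable {x y : ℕ → ℝ} {b : ℝ}

lemma abs_div_le_add_sum_of_abs_succ_le (hy : ∀ k, 0 < y k)
    (h : ∀ k, |x (k + 1)| ≤ b + |x k| / y k * y (k + 1)) (m : ℕ) :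
    |x m| / y m ≤ |x 0| / y 0 + b * ∑ j ∈ Finset.Icc 1 m, 1 / y j := by
  induction m with
  | zero => simp
  | succ m ih =>
    have hstep : |x (m + 1)| / y (m + 1) ≤ b / y (m + 1) + |x m| / y m := by
      rw [div_le_iff₀ (hy (m + 1)), add_mul, div_mul_cancel₀ _ (hy (m + 1)).ne']
      exact h m
    rw [Finset.sum_Icc_succ_top (by omega), mul_add, mul_one_div]
    linarith

lemma abs_le_of_abs_succ_le (hy : ∀ k, 0 < y k)
    (h : ∀ k, |x (k + 1)| ≤ b + |x k| / y k * y (k + 1)) (hb : 0 ≤ b) (n : ℕ) :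
    |x n| ≤ b * (1 + y n * ∑ j ∈ Finset.Icc 1 (n - 1), 1 / y j) + y n / y 0 * |x 0| := by
  cases n with
  | zero => simp [div_self (hy 0).ne', hb]
  | succ m =>
    have hm := mul_le_mul_of_nonneg_right (abs_div_le_add_sum_of_abs_succ_le hy h m)
      (hy (m + 1)).le
    rw [Nat.add_sub_cancel]
    calc |x (m + 1)| ≤ b + |x m| / y m * y (m + 1) := h m
      _ ≤ _ := by
        have hswap : y (m + 1) / y 0 * |x 0| = |x 0| / y 0 * y (m + 1) := by ring
        linarith

end Recursion

theorem stmt_12_general (β : ℝ) (μ : Measure ℝ) [IsFiniteMeasure μ]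
    (hsym : ∀ A : Set ℝ, MeasurableSet A → μ A = μ ((fun t : ℝ => -t) ⁻¹' A))
    (z₀ : ℂ) (hz₀ : 0 < z₀.im) (n : ℕ) :
    |((fmap β μ)^[n] z₀).re| ≤
      (|β| + (μ {0}).toReal / z₀.im) *
        (1 + ((fmap β μ)^[n] z₀).im *
          ∑ j ∈ Finset.Icc 1 (n - 1), 1 / ((fmap β μ)^[j] z₀).im) +
      (((fmap β μ)^[n] z₀).im / z₀.im) * |z₀.re| := by
  have := isNegInvariant_of_forall_measurableSet hsym
  have hpos : ∀ k, 0 < ((fmap β μ)^[k] z₀).im := by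
    intro k
    induction k with
    | zero => exact hz₀
    | succ k ih =>
      rw [Function.iterate_succ_apply']
      exact ih.trans_le (im_le_fmap_im ih)
  have hC : |β| ≤ |β| + (μ {0}).toReal / z₀.im := le_add_of_nonneg_right (by positivity)
  refine abs_le_of_abs_succ_le (x := fun k => ((fmap β μ)^[k] z₀).re) hpos (fun k => ?_)
    ((abs_nonneg β).trans hC) n
  rw [Function.iterate_succ_apply']
  exact (abs_fmap_re_le (hpos k)).trans (add_le_add_left hC _)

theorem stmt_12 (β : ℝ) (μ : Measure ℝ) [IsFiniteMeasure μ]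
    (hsym : ∀ A : Set ℝ, MeasurableSet A → μ A = μ ((fun t : ℝ => -t) ⁻¹' A))
    (hμ : ¬ Integrable (fun t : ℝ => t) μ) (hβ : β ≠ 0)
    (z₀ : ℂ) (hz₀ : 0 < z₀.im) (n : ℕ) (hn : 1 ≤ n) :
    |((fmap β μ)^[n] z₀).re| ≤
      (|β| + (μ {0}).toReal / z₀.im) *
        (1 + ((fmap β μ)^[n] z₀).im *
          ∑ j ∈ Finset.Icc 1 (n - 1), 1 / ((fmap β μ)^[j] z₀).im) +
      (((fmap β μ)^[n] z₀).im / z₀.im) * |z₀.re| :=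
  stmt_12_general β μ hsym z₀ hz₀ n
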